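/- arXiv:0711.3251 — 2 statements merged into one kernel-verified Lean document; each statement's English description precedes it below -/
import Mathlib

section
/- If A and B are N×N positive semidefinite Hermitian matrices, then log det(I + A + B) − log det(I + B) ≤ log det(I + A). -/
open Matrix
open scoped ComplexOrder MatrixOrder

/-! With `E = √A` and `C = 1 + B`, the matrix determinant lemma gives
`det (1 + A + B) = det C * det (1 + E C⁻¹ E)`. Since `C⁻¹ ≤ 1`, conjugating by `E` gives
`E C⁻¹ E ≤ E E = A`, and the determinant is monotone in the Loewner order on positive definite
matrices: if `P ≤ Q` then `Q = P + F F` with `F = √(Q - P)`, and the determinant lemma again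
gives `det Q = det P * det (1 + F P⁻¹ F) ≥ det P`, because `1 + R` has all eigenvalues `≥ 1`
for `R ≥ 0`. -/

namespace Matrix

variable {𝕜 n : Type*} [RCLike 𝕜] [Fintype n] [DecidableEq n]

theorem IsHermitian.det_cfc {A : Matrix n n 𝕜} (hA : A.IsHermitian) (f : ℝ → ℝ) :
    (cfc f A).det = ∏ i, (f (hA.eigenvalues i) : 𝕜) := by
  rw [hA.cfc_eq]
  simp [IsHermitian.cfc, -Unitary.conjStarAlgAut_apply]

theorem PosSemidef.one_le_det_one_add {R : Matrix n n 𝕜} (hR : R.PosSemidef) :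
    1 ≤ (1 + R).det := by
  have h1R : cfc (fun x : ℝ => 1 + x) R = 1 + R := by
    rw [cfc_add .., cfc_const_one .., cfc_id' ..]
  rw [← h1R, hR.isHermitian.det_cfc, ← RCLike.ofReal_prod, ← RCLike.ofReal_one,
    RCLike.ofReal_le_ofReal]
  exact Finset.one_le_prod fun i _ => le_add_of_nonneg_right (hR.eigenvalues_nonneg i)

theorem PosDef.det_le_det {P Q : Matrix n n 𝕜} (hP : P.PosDef) (hPQ : P ≤ Q) : P.det ≤ Q.det := by
  set E := CFC.sqrt (Q - P)
  have hE : Eᴴ = E := (CFC.sqrt_nonneg _).posSemidef.isHermitian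
  have hQ : Q = P + E * E := by
    rw [CFC.sqrt_mul_sqrt_self _ (sub_nonneg.mpr hPQ), add_sub_cancel]
  have hX : (E * P⁻¹ * E).PosSemidef := by
    simpa only [hE] using hP.inv.posSemidef.conjTranspose_mul_mul_same E
  rw [hQ, det_add_mul E E hP.det_pos.ne'.isUnit]
  exact le_mul_of_one_le_right hP.det_pos.le hX.one_le_det_one_add

theorem PosSemidef.inv_one_add_le_one {B : Matrix n n 𝕜} (hB : B.PosSemidef) : (1 + B)⁻¹ ≤ 1 := by
  have hC : (1 + B).PosDef := PosDef.one.add_posSemidef hB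
  set C := 1 + B
  have hCi : C⁻¹ᴴ = C⁻¹ := hC.inv.isHermitian
  -- `B` commutes with `C`, so `1 - C⁻¹ = B C⁻¹ = C⁻¹ (B + B²) C⁻¹`.
  have h : 1 - C⁻¹ = C⁻¹ᴴ * (B + Bᴴ * B) * C⁻¹ := by
    have hu : IsUnit C.det := hC.det_pos.ne'.isUnit
    rw [hCi, hB.isHermitian.eq]
    calc 1 - C⁻¹ = (C - 1) * C⁻¹ := by rw [sub_mul, mul_nonsing_inv _ hu, one_mul]
      _ = C⁻¹ * C * (C - 1) * C⁻¹ := by rw [nonsing_inv_mul _ hu, one_mul]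
      _ = C⁻¹ * (B + B * B) * C⁻¹ := by simp only [C]; noncomm_ring
  rw [le_iff, h]
  exact (hB.add (posSemidef_conjTranspose_mul_self B)).conjTranspose_mul_mul_same _

theorem PosSemidef.det_one_add_add_le {A B : Matrix n n 𝕜} (hA : A.PosSemidef)
    (hB : B.PosSemidef) : (1 + A + B).det ≤ (1 + B).det * (1 + A).det := by
  set E := CFC.sqrt A
  have hE : Eᴴ = E := (CFC.sqrt_nonneg _).posSemidef.isHermitian
  have hEE : E * E = A := CFC.sqrt_mul_sqrt_self _ hA.nonneg
  have hC : (1 + B).PosDef := PosDef.one.add_posSemidef hB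
  have hX : (E * (1 + B)⁻¹ * E).PosSemidef := by
    simpa only [hE] using hC.inv.posSemidef.conjTranspose_mul_mul_same E
  have hXA : E * (1 + B)⁻¹ * E ≤ A := by
    simpa only [star_eq_conjTranspose, hE, mul_one, hEE] using
      star_left_conjugate_le_conjugate hB.inv_one_add_le_one E
  calc (1 + A + B).det = (1 + B + E * E).det := by rw [hEE, add_right_comm]
    _ = (1 + B).det * (1 + E * (1 + B)⁻¹ * E).det := det_add_mul E E hC.det_pos.ne'.isUnit
    _ ≤ (1 + B).det * (1 + A).det := by
      gcongr
      · exact hC.det_pos.le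
      · exact (PosDef.one.add_posSemidef hX).det_le_det (by gcongr)

theorem PosDef.ofReal_re_det {P : Matrix n n ℂ} (hP : P.PosDef) : (P.det.re : ℂ) = P.det :=
  (Complex.eq_re_of_ofReal_le (by exact_mod_cast hP.det_pos.le)).symm

theorem PosDef.re_det_pos {P : Matrix n n ℂ} (hP : P.PosDef) : 0 < P.det.re :=
  (Complex.pos_iff.mp hP.det_pos).1

end Matrix

theorem logdet_interference_bound (N : ℕ) (A B : Matrix (Fin N) (Fin N) ℂ)
    (hA : A.PosSemidef) (hB : B.PosSemidef) :
    Real.log ((1 + A + B).det).re - Real.log ((1 + B).det).re ≤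
      Real.log ((1 + A).det).re := by
  have hA1 : (1 + A).PosDef := PosDef.one.add_posSemidef hA
  have hB1 : (1 + B).PosDef := PosDef.one.add_posSemidef hB
  have hAB1 : (1 + A + B).PosDef := hA1.add_posSemidef hB
  have hdet_le : ((1 + A + B).det).re ≤ ((1 + B).det).re * ((1 + A).det).re := by
    have h := hA.det_one_add_add_le hB
    rw [← hAB1.ofReal_re_det, ← hB1.ofReal_re_det, ← hA1.ofReal_re_det] at h
    exact_mod_cast h
  rw [sub_le_iff_le_add', ← Real.log_mul hB1.re_det_pos.ne' hA1.re_det_pos.ne']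
  exact Real.log_le_log hAB1.re_det_pos hdet_le
end

section
/- Let X₁, …, X_{2^B} be i.i.d. random variables in [0, N] and let D = E[min_i X_i]. If each X_i satisfies P(X_i ≤ x) ≥ C·x^T for all x ∈ [0, x₀] with C·x₀^T ≤ 1, then D ≤ (Γ(1/T)/T)·C^{−1/T}·2^{−B/T} + N·(1 − C·x₀^T)^{2^B}. -/
open MeasureTheory ProbabilityTheory Real Set

/-!
The minimum of the `2 ^ B` variables exceeds `t` iff each of them does, so by independence
`P(min > t) = P(X₀ > t) ^ 2 ^ B`, and the layer-cake formula turns `E[min]` into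
`∫₀^∞ P(X₀ > t) ^ 2 ^ B dt`. On `(0, x₀]` the integrand is at most
`(1 - C t ^ T) ^ 2 ^ B ≤ exp (-2 ^ B C t ^ T)`, whose integral over `(0, ∞)` is a Gamma integral;
on `(x₀, N]` it is at most its value at `x₀` by monotonicity, and beyond `N` it vanishes.
-/

theorem lt_ciInf_iff_of_finite {ι α : Type*} [Finite ι] [Nonempty ι]
    [ConditionallyCompleteLinearOrder α] {f : ι → α} {a : α} :
    a < ⨅ i, f i ↔ ∀ i, a < f i := by
  refine ⟨fun h i => h.trans_le (ciInf_le (Set.finite_range f).bddBelow i), fun h => ?_⟩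
  obtain ⟨i, hi⟩ := exists_eq_ciInf_of_finite (f := f)
  exact hi ▸ h i

section Minimum

variable {ι Ω : Type*} [Fintype ι] [MeasurableSpace Ω] {μ : Measure Ω} {X : ι → Ω → ℝ}

theorem measure_lt_iInf_eq_pow (i₀ : ι) (hmeas : ∀ i, Measurable (X i))
    (hindep : iIndepFun X μ) (hident : ∀ i, μ.map (X i) = μ.map (X i₀)) (t : ℝ) :
    μ {ω | t < ⨅ i, X i ω} = μ {ω | t < X i₀ ω} ^ Fintype.card ι := by
  have : Nonempty ι := ⟨i₀⟩
  have hset : {ω | t < ⨅ i, X i ω} = ⋂ i, X i ⁻¹' Ioi t := by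
    ext ω
    simp [lt_ciInf_iff_of_finite]
  have hsame : ∀ i, μ (X i ⁻¹' Ioi t) = μ (X i₀ ⁻¹' Ioi t) := fun i => by
    rw [← Measure.map_apply (hmeas i) measurableSet_Ioi, hident i,
      Measure.map_apply (hmeas i₀) measurableSet_Ioi]
  rw [hset, hindep.meas_iInter fun i => ⟨Ioi t, measurableSet_Ioi, rfl⟩]
  simp only [hsame, Finset.prod_const, Finset.card_univ]
  rfl

theorem integral_iInf_eq_integral_tail_pow [IsFiniteMeasure μ] (i₀ : ι)
    (hmeas : ∀ i, Measurable (X i)) (hindep : iIndepFun X μ)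
    (hident : ∀ i, μ.map (X i) = μ.map (X i₀)) (hnonneg : ∀ i, 0 ≤ᵐ[μ] X i)
    (hint : Integrable (X i₀) μ) :
    ∫ ω, ⨅ i, X i ω ∂μ = ∫ t in Ioi 0, μ.real {ω | t < X i₀ ω} ^ Fintype.card ι := by
  have : Nonempty ι := ⟨i₀⟩
  have hnonneg_inf : 0 ≤ᵐ[μ] fun ω => ⨅ i, X i ω := by
    filter_upwards [ae_all_iff.2 hnonneg] with ω hω
    exact le_ciInf hω
  have hint_inf : Integrable (fun ω => ⨅ i, X i ω) μ := by
    refine hint.mono' (Measurable.iInf hmeas).aestronglyMeasurable ?_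
    filter_upwards [hnonneg_inf] with ω hω
    rw [Real.norm_of_nonneg hω]
    exact ciInf_le (Set.finite_range _).bddBelow i₀
  rw [hint_inf.integral_eq_integral_meas_lt hnonneg_inf]
  simp only [measureReal_def, measure_lt_iInf_eq_pow i₀ hmeas hindep hident, ENNReal.toReal_pow]

end Minimum

theorem measureReal_lt_le_one_sub {Ω : Type*} [MeasurableSpace Ω] {μ : Measure Ω}
    [IsProbabilityMeasure μ] {X : Ω → ℝ} (hX : Measurable X) {a t : ℝ}
    (h : ENNReal.ofReal a ≤ μ {ω | X ω ≤ t}) : μ.real {ω | t < X ω} ≤ 1 - a := by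
  have hcompl : {ω | t < X ω} = {ω | X ω ≤ t}ᶜ := by
    ext ω
    simp
  rw [hcompl, probReal_compl_eq_one_sub (measurableSet_le hX measurable_const)]
  have := (ENNReal.ofReal_le_iff_le_toReal (measure_ne_top μ _)).1 h
  rw [measureReal_def]
  linarith

theorem measure_lt_eq_zero_of_ae_le {Ω : Type*} [MeasurableSpace Ω] {μ : Measure Ω}
    {X : Ω → ℝ} {N t : ℝ} (hX : ∀ᵐ ω ∂μ, X ω ≤ N) (ht : N < t) : μ {ω | t < X ω} = 0 :=
  measure_mono_null (t := {ω | N < X ω}) (fun _ hω => ht.trans hω)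
    (by simpa only [not_le] using ae_iff.1 hX)

theorem pow_le_exp_neg_mul {q a : ℝ} (n : ℕ) (hq : 0 ≤ q) (hqa : q ≤ 1 - a) :
    q ^ n ≤ exp (-(n * a)) :=
  calc q ^ n ≤ exp (-a) ^ n := pow_le_pow_left₀ hq (by linarith [add_one_le_exp (-a)]) n
    _ = exp (-(n * a)) := by rw [← exp_nat_mul, neg_mul_eq_mul_neg]

theorem setIntegral_Ioi_le_of_antitone {f g : ℝ → ℝ} {x₀ N : ℝ} (hg : Antitone g)
    (hgN : ∀ t, N < t → g t = 0) (hx₀ : 0 ≤ x₀) (hx₀N : x₀ ≤ N)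
    (hf : IntegrableOn f (Ioi 0)) (hf0 : ∀ t ∈ Ioi 0, 0 ≤ f t)
    (hgf : ∀ t ∈ Ioc 0 x₀, g t ≤ f t) :
    ∫ t in Ioi 0, g t ≤ (∫ t in Ioi 0, f t) + (N - x₀) * g x₀ := by
  have hg0 : ∀ t, 0 ≤ g t := fun t =>
    hgN _ (lt_max_of_lt_right (lt_add_one N)) ▸ hg (le_max_left t (N + 1))
  set h : ℝ → ℝ := fun t => f t + (Ioc x₀ N).indicator (fun _ => g x₀) t
  have hle : ∀ t ∈ Ioi 0, g t ≤ h t := by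
    intro t ht
    rcases le_or_gt t x₀ with htx | hxt
    · have := hgf t ⟨ht, htx⟩
      have := indicator_nonneg (fun _ _ => hg0 x₀) t (s := Ioc x₀ N)
      linarith
    rcases le_or_gt t N with htN | hNt
    · simp only [h, indicator_of_mem (show t ∈ Ioc x₀ N from ⟨hxt, htN⟩)]
      linarith [hf0 t ht, hg hxt.le]
    · have := indicator_nonneg (fun _ _ => hg0 x₀) t (s := Ioc x₀ N)
      linarith [hgN t hNt, hf0 t ht]
  have hind : Integrable ((Ioc x₀ N).indicator fun _ => g x₀) :=
    (integrable_indicator_iff measurableSet_Ioc).2 (integrableOn_const measure_Ioc_lt_top.ne)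
  have hh : IntegrableOn h (Ioi 0) := hf.add hind.integrableOn
  have hgi : IntegrableOn g (Ioi 0) := by
    refine hh.mono' hg.measurable.aestronglyMeasurable ?_
    filter_upwards [ae_restrict_mem measurableSet_Ioi] with t ht
    rw [Real.norm_of_nonneg (hg0 t)]
    exact hle t ht
  calc ∫ t in Ioi 0, g t ≤ ∫ t in Ioi 0, h t := setIntegral_mono_on hgi hh measurableSet_Ioi hle
    _ = (∫ t in Ioi 0, f t) + (N - x₀) * g x₀ := by
      rw [integral_add hf hind.integrableOn, setIntegral_indicator measurableSet_Ioc,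
        inter_eq_right.2 (Ioc_subset_Ioi_self.trans (Ioi_subset_Ioi hx₀)), setIntegral_const,
        Real.volume_real_Ioc_of_le hx₀N, smul_eq_mul]

theorem integral_exp_neg_mul_rpow_eq_Gamma_div {p b : ℝ} (hp : 0 < p) (hb : 0 < b) :
    ∫ t in Ioi 0, exp (-b * t ^ p) = Gamma (1 / p) / p * b ^ (-(1 / p)) := by
  rw [integral_exp_neg_mul_rpow hp hb, Gamma_add_one (one_div_ne_zero hp.ne'), neg_div]
  ring

theorem integrableOn_exp_neg_mul_rpow {p b : ℝ} (hp : 0 < p) (hb : 0 < b) :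
    IntegrableOn (fun t => exp (-b * t ^ p)) (Ioi 0) := by
  simpa using integrableOn_rpow_mul_exp_neg_mul_rpow (s := 0) (by norm_num) hp hb

theorem two_pow_rpow_neg_one_div (B : ℕ) (p : ℝ) :
    ((2 : ℝ) ^ B) ^ (-(1 / p)) = 2 ^ (-(B / p)) := by
  rw [← rpow_natCast, ← rpow_mul zero_le_two]
  ring_nf

theorem random_codebook_distortion_bound_general (B T N : ℕ) (hT : 1 ≤ T)
    (C x₀ : ℝ) (hC : 0 < C) (hx₀ : 0 < x₀) (hx₀N : x₀ ≤ N)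
    {Ω : Type} [MeasurableSpace Ω] (μ : Measure Ω) [IsProbabilityMeasure μ]
    (X : Fin (2 ^ B) → Ω → ℝ) (hmeas : ∀ i, Measurable (X i))
    (hindep : iIndepFun X μ)
    (hident : ∀ i, Measure.map (X i) μ = Measure.map (X 0) μ)
    (hrange : ∀ i, ∀ᵐ ω ∂μ, X i ω ∈ Set.Icc (0 : ℝ) N)
    (hcdf : ∀ i, ∀ x ∈ Set.Icc (0 : ℝ) x₀,
      ENNReal.ofReal (C * x ^ T) ≤ μ {ω | X i ω ≤ x}) :
    (∫ ω, ⨅ i, X i ω ∂μ) ≤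
      Real.Gamma (1 / T) / T * C ^ (-(1 / (T : ℝ))) * 2 ^ (-((B : ℝ) / T)) +
        N * (1 - C * x₀ ^ T) ^ (2 ^ B) := by
  set p : ℝ → ℝ := fun t => μ.real {ω | t < X 0 ω}
  have hT0 : (0 : ℝ) < T := by exact_mod_cast hT
  have hb : (0 : ℝ) < 2 ^ B * C := by positivity
  have hp_le : ∀ t ∈ Icc 0 x₀, p t ≤ 1 - C * t ^ T := fun t ht =>
    measureReal_lt_le_one_sub (hmeas 0) (hcdf 0 t ht)
  have hp_anti : Antitone fun t => p t ^ 2 ^ B := fun s t hst =>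
    pow_le_pow_left₀ measureReal_nonneg (measureReal_mono fun ω hω => hst.trans_lt hω) _
  have hp_zero : ∀ t : ℝ, N < t → p t ^ 2 ^ B = 0 := fun t ht => by
    simp [p, measureReal_def, measure_lt_eq_zero_of_ae_le ((hrange 0).mono fun ω h => h.2) ht]
  have hp_exp : ∀ t ∈ Ioc 0 x₀, p t ^ 2 ^ B ≤ exp (-(2 ^ B * C) * t ^ (T : ℝ)) := fun t ht =>
    (pow_le_exp_neg_mul _ measureReal_nonneg (hp_le t (Ioc_subset_Icc_self ht))).trans_eq
      (by rw [rpow_natCast]; push_cast; ring_nf)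
  have hmean : ∫ ω, ⨅ i, X i ω ∂μ = ∫ t in Ioi 0, p t ^ 2 ^ B := by
    simpa using integral_iInf_eq_integral_tail_pow 0 hmeas hindep hident
      (fun i => (hrange i).mono fun ω h => h.1)
      (Integrable.of_mem_Icc 0 N (hmeas 0).aemeasurable (hrange 0))
  calc ∫ ω, ⨅ i, X i ω ∂μ = ∫ t in Ioi 0, p t ^ 2 ^ B := hmean
    _ ≤ (∫ t in Ioi 0, exp (-(2 ^ B * C) * t ^ (T : ℝ))) + (N - x₀) * p x₀ ^ 2 ^ B :=
        setIntegral_Ioi_le_of_antitone hp_anti hp_zero hx₀.le hx₀N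
          (integrableOn_exp_neg_mul_rpow hT0 hb) (fun t _ => (exp_pos _).le) hp_exp
    _ ≤ _ := by
        rw [integral_exp_neg_mul_rpow_eq_Gamma_div hT0 hb, mul_rpow (by positivity) hC.le,
          two_pow_rpow_neg_one_div, ← mul_assoc, mul_right_comm _ (2 ^ _)]
        gcongr
        · linarith
        · exact hp_le x₀ ⟨hx₀.le, le_rfl⟩

/-- Distortion bound for random quantization codebooks: if `X₁, …, X_{2^B}` are
i.i.d. random variables in `[0, N]` with `P(Xᵢ ≤ x) ≥ C x^T` on `[0, x₀]` and
`C x₀^T ≤ 1`, then the expected minimum satisfies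
`E[minᵢ Xᵢ] ≤ (Γ(1/T)/T) C^{−1/T} 2^{−B/T} + N (1 − C x₀^T)^{2^B}`. -/
theorem random_codebook_distortion_bound (B T N : ℕ) (hB : 1 ≤ B) (hT : 1 ≤ T)
    (hN : 1 ≤ N) (C x₀ : ℝ) (hC : 0 < C) (hx₀ : 0 < x₀) (hx₀N : x₀ ≤ N)
    (hCx₀ : C * x₀ ^ T ≤ 1)
    {Ω : Type} [MeasurableSpace Ω] (μ : Measure Ω) [IsProbabilityMeasure μ]
    (X : Fin (2 ^ B) → Ω → ℝ) (hmeas : ∀ i, Measurable (X i))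
    (hindep : iIndepFun X μ)
    (hident : ∀ i, Measure.map (X i) μ = Measure.map (X 0) μ)
    (hrange : ∀ i, ∀ᵐ ω ∂μ, X i ω ∈ Set.Icc (0 : ℝ) N)
    (hcdf : ∀ i, ∀ x ∈ Set.Icc (0 : ℝ) x₀,
      ENNReal.ofReal (C * x ^ T) ≤ μ {ω | X i ω ≤ x}) :
    (∫ ω, ⨅ i, X i ω ∂μ) ≤
      Real.Gamma (1 / T) / T * C ^ (-(1 / (T : ℝ))) * 2 ^ (-((B : ℝ) / T)) +
        N * (1 - C * x₀ ^ T) ^ (2 ^ B) :=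
  random_codebook_distortion_bound_general B T N hT C x₀ hC hx₀ hx₀N μ X hmeas hindep hident hrange
    hcdf
end
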